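/- arXiv:1409.7240 — 2 statements merged into one kernel-verified Lean document; each statement's English description precedes it below -/
import Mathlib

section
/- Let V be a finite set of n vertices and let G_0, G_1, …, G_m be simple graphs on V such that for each i < m, G_{i+1} is obtained from G_i by deleting a single edge e_i = {u_i, w_i} of G_i. Let B be the set of indices i < m for which e_i is a bridge of G_i. Then the sum over all i ∈ B of min(|comp_{G_{i+1}}(u_i)|, |comp_{G_{i+1}}(w_i)|) is at most n · log₂ n. -/
/-!
Consider the potential `Φ(G) = ∑ᵥ log₂ |comp_G(v)|`, which lies between `0` and `n log₂ n` and
never increases when an edge is deleted. When a bridge `{u, w}` is deleted and the side `A` of `u`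
is the smaller one, every vertex of `A` sees its component shrink from `|A| + |B| ≥ 2|A|` to `|A|`,
so loses at least `1` from its logarithm: `Φ` drops by at least `min(|A|, |B|)`. Summing these
drops along the sequence telescopes to at most `Φ(G₀) ≤ n log₂ n`.
-/

namespace SimpleGraph

variable {V : Type*}

noncomputable def compCard (G : SimpleGraph V) (v : V) : ℕ := {x | G.Reachable v x}.ncard

section Finite

variable [Finite V]

lemma compCard_pos (G : SimpleGraph V) (v : V) : 0 < G.compCard v :=
  (Set.ncard_pos (Set.toFinite _)).mpr ⟨v, Reachable.refl v⟩

lemma compCard_le_natCard (G : SimpleGraph V) (v : V) : G.compCard v ≤ Nat.card V :=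
  Set.ncard_le_card _

lemma compCard_mono {G H : SimpleGraph V} (h : H ≤ G) (v : V) : H.compCard v ≤ G.compCard v :=
  Set.ncard_le_ncard (fun _ hx => hx.mono h) (Set.toFinite _)

lemma logb_compCard_mono {G H : SimpleGraph V} (h : H ≤ G) (v : V) :
    Real.logb 2 (H.compCard v) ≤ Real.logb 2 (G.compCard v) :=
  Real.logb_le_logb_of_le one_lt_two (mod_cast H.compCard_pos v) (mod_cast compCard_mono h v)

end Finite

lemma compCard_eq_of_reachable {G : SimpleGraph V} {v v' : V} (h : G.Reachable v v') :
    G.compCard v = G.compCard v' := by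
  have hset : {x | G.Reachable v x} = {x | G.Reachable v' x} :=
    Set.ext fun _ => ⟨h.symm.trans, h.trans⟩
  rw [compCard, compCard, hset]

lemma Reachable.deleteEdges_singleton {G : SimpleGraph V} {u w y : V} (h : G.Reachable u y) :
    (G.deleteEdges {s(u, w)}).Reachable u y ∨ (G.deleteEdges {s(u, w)}).Reachable w y := by
  rw [reachable_iff_reflTransGen] at h
  induction h with
  | refl => exact Or.inl (Reachable.refl u)
  | @tail b c _ hbc ih =>
    by_cases he : s(b, c) = s(u, w)
    · rcases Sym2.eq_iff.mp he with ⟨-, rfl⟩ | ⟨-, rfl⟩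
      · exact Or.inr (Reachable.refl c)
      · exact Or.inl (Reachable.refl c)
    · have hbc' : (G.deleteEdges {s(u, w)}).Adj b c := deleteEdges_adj.mpr ⟨hbc, he⟩
      exact ih.imp (·.trans hbc'.reachable) (·.trans hbc'.reachable)

lemma compCard_eq_add_of_isBridge [Finite V] {G : SimpleGraph V} {u w : V} (hadj : G.Adj u w)
    (hbridge : ¬ (G.deleteEdges {s(u, w)}).Reachable u w) :
    G.compCard u = (G.deleteEdges {s(u, w)}).compCard u + (G.deleteEdges {s(u, w)}).compCard w := by
  set H := G.deleteEdges {s(u, w)}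
  have hle : H ≤ G := deleteEdges_le _
  have hset : {x | G.Reachable u x} = {x | H.Reachable u x} ∪ {x | H.Reachable w x} := by
    ext x
    refine ⟨Reachable.deleteEdges_singleton, ?_⟩
    rintro (hx | hx)
    · exact hx.mono hle
    · exact hadj.reachable.trans (hx.mono hle)
  have hdisj : Disjoint {x | H.Reachable u x} {x | H.Reachable w x} :=
    Set.disjoint_left.mpr fun _ hu hw => hbridge (hu.trans hw.symm)
  rw [compCard, hset, Set.ncard_union_eq hdisj (Set.toFinite _) (Set.toFinite _)]
  rfl

section Potential

variable [Fintype V]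

noncomputable def compPotential (G : SimpleGraph V) : ℝ := ∑ v, Real.logb 2 (G.compCard v)

lemma compPotential_nonneg (G : SimpleGraph V) : 0 ≤ G.compPotential :=
  Finset.sum_nonneg fun v _ => Real.logb_nonneg one_lt_two (mod_cast G.compCard_pos v)

lemma compPotential_le (G : SimpleGraph V) :
    G.compPotential ≤ Fintype.card V * Real.logb 2 (Fintype.card V) := by
  have hterm : ∀ v ∈ Finset.univ, Real.logb 2 (G.compCard v) ≤ Real.logb 2 (Fintype.card V) :=
    fun v _ => Real.logb_le_logb_of_le one_lt_two (mod_cast G.compCard_pos v)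
      (mod_cast Nat.card_eq_fintype_card (α := V) ▸ G.compCard_le_natCard v)
  simpa [compPotential] using Finset.sum_le_card_nsmul _ _ _ hterm

lemma compPotential_mono {G H : SimpleGraph V} (h : H ≤ G) : H.compPotential ≤ G.compPotential :=
  Finset.sum_le_sum fun v _ => logb_compCard_mono h v

lemma compCard_le_compPotential_sub_of_isBridge {G : SimpleGraph V} {u w : V} (hadj : G.Adj u w)
    (hbridge : ¬ (G.deleteEdges {s(u, w)}).Reachable u w)
    (hsmall : (G.deleteEdges {s(u, w)}).compCard u ≤ (G.deleteEdges {s(u, w)}).compCard w) :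
    ((G.deleteEdges {s(u, w)}).compCard u : ℝ) ≤
      G.compPotential - (G.deleteEdges {s(u, w)}).compPotential := by
  classical
  set H := G.deleteEdges {s(u, w)}
  set a := H.compCard u
  have hle : H ≤ G := deleteEdges_le _
  have hlog_a : Real.logb 2 (2 * a) = 1 + Real.logb 2 a := by
    rw [Real.logb_mul two_ne_zero (mod_cast (H.compCard_pos u).ne'),
      Real.logb_self_eq_one one_lt_two]
  have hdrop : ∀ v ∈ {x | H.Reachable u x}.toFinset,
      1 ≤ Real.logb 2 (G.compCard v) - Real.logb 2 (H.compCard v) := by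
    intro v hv
    have huv : H.Reachable u v := by simpa using hv
    have hG : G.compCard v = a + H.compCard w := by
      rw [← compCard_eq_of_reachable (huv.mono hle), compCard_eq_add_of_isBridge hadj hbridge]
    have hH : H.compCard v = a := (compCard_eq_of_reachable huv).symm
    have h2a : (2 * a : ℝ) ≤ (G.compCard v : ℝ) := by
      rw [hG]; push_cast; linarith [(Nat.cast_le (α := ℝ)).mpr hsmall]
    have := Real.logb_le_logb_of_le one_lt_two (by positivity [H.compCard_pos u]) h2a
    rw [hH]
    linarith
  calc (a : ℝ) = ∑ _v ∈ {x | H.Reachable u x}.toFinset, (1 : ℝ) := by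
        simp [a, compCard, Set.ncard_eq_toFinset_card']
    _ ≤ ∑ v ∈ {x | H.Reachable u x}.toFinset,
          (Real.logb 2 (G.compCard v) - Real.logb 2 (H.compCard v)) := Finset.sum_le_sum hdrop
    _ ≤ ∑ v, (Real.logb 2 (G.compCard v) - Real.logb 2 (H.compCard v)) :=
        Finset.sum_le_sum_of_subset_of_nonneg (Finset.subset_univ _)
          fun v _ _ => sub_nonneg.mpr (logb_compCard_mono hle v)
    _ = G.compPotential - H.compPotential := Finset.sum_sub_distrib _ _

lemma min_compCard_le_compPotential_sub_of_isBridge {G : SimpleGraph V} {u w : V}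
    (hadj : G.Adj u w) (hbridge : ¬ (G.deleteEdges {s(u, w)}).Reachable u w) :
    ((min ((G.deleteEdges {s(u, w)}).compCard u) ((G.deleteEdges {s(u, w)}).compCard w) : ℕ) : ℝ) ≤
      G.compPotential - (G.deleteEdges {s(u, w)}).compPotential := by
  rcases le_total ((G.deleteEdges {s(u, w)}).compCard u)
    ((G.deleteEdges {s(u, w)}).compCard w) with h | h
  · rw [min_eq_left h]
    exact compCard_le_compPotential_sub_of_isBridge hadj hbridge h
  · rw [min_eq_right h]
    have hswap : (s(w, u) : Sym2 V) = s(u, w) := Sym2.eq_swap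
    have := compCard_le_compPotential_sub_of_isBridge (u := w) (w := u) hadj.symm
      (by rw [hswap]; exact fun hr => hbridge hr.symm) (by rwa [hswap])
    rwa [hswap] at this

end Potential

end SimpleGraph

/-- Let `G 0, G 1, …, G m` be simple graphs on a finite vertex set of
size `n`, where `G (i+1)` is obtained from `G i` by deleting the edge
`e i = s(u i, w i)`.  Let `B` be the set of indices `i < m` such that `e i` is a
bridge of `G i` (i.e. `u i` and `w i` are not connected in `G (i+1) = G i − e i`).
Then `∑ i ∈ B, min |comp_{G (i+1)}(u i)| |comp_{G (i+1)}(w i)| ≤ n · log₂ n`. -/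
theorem stmt3 {V : Type*} [Fintype V] (n m : ℕ) (hn : Fintype.card V = n)
    (G : ℕ → SimpleGraph V) (u w : ℕ → V)
    (hdel : ∀ i < m, (G i).Adj (u i) (w i) ∧
      G (i + 1) = (G i).deleteEdges {s(u i, w i)})
    (B : Finset ℕ)
    (hB : ∀ i, i ∈ B ↔ i < m ∧ ¬ (G (i + 1)).Reachable (u i) (w i)) :
    ((∑ i ∈ B, min {x | (G (i + 1)).Reachable (u i) x}.ncard
        {x | (G (i + 1)).Reachable (w i) x}.ncard : ℕ) : ℝ) ≤
      n * Real.logb 2 n := by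
  subst hn
  have hB_range : B ⊆ Finset.range m := fun i hi => Finset.mem_range.mpr ((hB i).mp hi).1
  have hbridge_drop : ∀ i ∈ B, ((min ((G (i + 1)).compCard (u i)) ((G (i + 1)).compCard (w i))
      : ℕ) : ℝ) ≤ (G i).compPotential - (G (i + 1)).compPotential := by
    intro i hi
    obtain ⟨hlt, hnr⟩ := (hB i).mp hi
    obtain ⟨hadj, hG⟩ := hdel i hlt
    rw [hG] at hnr ⊢
    exact SimpleGraph.min_compCard_le_compPotential_sub_of_isBridge hadj hnr
  have hstep_nonneg : ∀ i ∈ Finset.range m, 0 ≤ (G i).compPotential - (G (i + 1)).compPotential :=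
    fun i hi => sub_nonneg.mpr <| by
      rw [(hdel i (Finset.mem_range.mp hi)).2]
      exact SimpleGraph.compPotential_mono (SimpleGraph.deleteEdges_le _)
  calc _ ≤ ∑ i ∈ B, ((G i).compPotential - (G (i + 1)).compPotential) := by
        rw [Nat.cast_sum]; exact Finset.sum_le_sum hbridge_drop
    _ ≤ ∑ i ∈ Finset.range m, ((G i).compPotential - (G (i + 1)).compPotential) :=
        Finset.sum_le_sum_of_subset_of_nonneg hB_range fun i hi _ => hstep_nonneg i hi
    _ = (G 0).compPotential - (G m).compPotential := Finset.sum_range_sub' _ _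
    _ ≤ _ := by linarith [(G 0).compPotential_le, (G m).compPotential_nonneg]
end

section
/- Let G be a finite simple graph whose edge set is partitioned into regions E_1, …, E_k, let V_s be a skeleton set (a set of vertices containing every boundary vertex of the partition), and let G_s be the associated skeleton graph. Then for any two vertices u, w ∈ V_s, u and w are connected in G_s if and only if u and w are connected in G. -/
/-- The region graph `R_i`: the graph on the full vertex set `V` whose edges are the
edges of the part `E i`. -/
def regG {V : Type*} {k : ℕ} (E : Fin k → Set (Sym2 V)) (i : Fin k) : SimpleGraph V :=
  SimpleGraph.fromEdgeSet (E i)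

/-- The vertex type of the skeleton graph: skeleton vertices (elements of `Vs`)
together with one auxiliary vertex for each pair `(i, group)`, a group being a
nonempty equivalence class of `Vs ∩ V(R i)` under connectivity in `R i` (encoded by
the connected component of `R i` containing the group). -/
def SkelV {V : Type*} {k : ℕ} (E : Fin k → Set (Sym2 V)) (Vs : Set V) : Type _ :=
  {x : V ⊕ (Σ i : Fin k, (regG E i).ConnectedComponent) //
    Sum.elim (· ∈ Vs)
      (fun p => ∃ v ∈ Vs, v ∈ (regG E p.1).support ∧
        (regG E p.1).connectedComponentMk v = p.2) x}

/-- The skeleton graph: each auxiliary vertex `(i, c)` is joined to every vertex of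
its group, i.e. to every `v ∈ Vs` with `v ∈ V(R i)` lying in the component `c`
of `R i`. -/
def skelGraph {V : Type*} {k : ℕ} (E : Fin k → Set (Sym2 V)) (Vs : Set V) :
    SimpleGraph (SkelV E Vs) where
  Adj x y :=
    (∃ (v : V) (i : Fin k) (c : (regG E i).ConnectedComponent),
      x.1 = Sum.inl v ∧ y.1 = Sum.inr ⟨i, c⟩ ∧
      v ∈ (regG E i).support ∧ (regG E i).connectedComponentMk v = c) ∨
    (∃ (v : V) (i : Fin k) (c : (regG E i).ConnectedComponent),
      y.1 = Sum.inl v ∧ x.1 = Sum.inr ⟨i, c⟩ ∧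
      v ∈ (regG E i).support ∧ (regG E i).connectedComponentMk v = c)
  symm := ⟨fun x y h => h.elim Or.inr Or.inl⟩
  loopless := by
    refine ⟨?_⟩
    rintro x (⟨v, i, c, h1, h2, -, -⟩ | ⟨v, i, c, h1, h2, -, -⟩) <;>
      · rw [h1] at h2; simp at h2

/-!
A skeleton vertex `v` and the auxiliary vertex of a region component containing `v` both
"lie over" `v`. Adjacent vertices of the skeleton graph lie over a common vertex of `G`, and
whatever lies over `v` determines the component of `v` in `G`; hence skeleton-connected
vertices are `G`-connected. Conversely, along an edge `v w` of `G` in region `j`, a skeleton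
vertex lying over `v` reaches one lying over `w`: either it already is the auxiliary vertex of
the `j`-component of `v`, or `v` is incident to two regions, hence a skeleton vertex through
which one passes to that auxiliary vertex.
-/

open SimpleGraph

section

variable {V : Type*} {k : ℕ} {E : Fin k → Set (Sym2 V)} {Vs : Set V}

def IsBoundary (E : Fin k → Set (Sym2 V)) (v : V) : Prop :=
  ∃ i j, i ≠ j ∧ (∃ e ∈ E i, v ∈ e) ∧ (∃ e' ∈ E j, v ∈ e')

lemma regG_adj {i : Fin k} {v w : V} : (regG E i).Adj v w ↔ s(v, w) ∈ E i ∧ v ≠ w :=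
  fromEdgeSet_adj _

lemma regG_le {G : SimpleGraph V} {i : Fin k} (hsub : E i ⊆ G.edgeSet) : regG E i ≤ G :=
  fun _ _ h => hsub (regG_adj.1 h).1

lemma isBoundary_of_mem_support {i j : Fin k} {v w : V} (hij : i ≠ j)
    (hv : v ∈ (regG E i).support) (hj : s(v, w) ∈ E j) : IsBoundary E v := by
  obtain ⟨u, hu⟩ := hv
  exact ⟨i, j, hij, ⟨s(v, u), (regG_adj.1 hu).1, Sym2.mem_mk_left v u⟩,
    ⟨s(v, w), hj, Sym2.mem_mk_left v w⟩⟩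

namespace SkelV

def LiesOver (x : SkelV E Vs) (v : V) : Prop :=
  x.1 = Sum.inl v ∨
    ∃ i, v ∈ (regG E i).support ∧ x.1 = Sum.inr ⟨i, (regG E i).connectedComponentMk v⟩

lemma liesOver_inl {v : V} (hv : v ∈ Vs) : LiesOver (⟨Sum.inl v, hv⟩ : SkelV E Vs) v :=
  Or.inl rfl

lemma exists_liesOver_of_adj {x y : SkelV E Vs} (h : (skelGraph E Vs).Adj x y) :
    ∃ v, LiesOver x v ∧ LiesOver y v := by
  rcases h with ⟨v, i, c, hx, hy, hv, rfl⟩ | ⟨v, i, c, hy, hx, hv, rfl⟩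
  · exact ⟨v, Or.inl hx, Or.inr ⟨i, hv, hy⟩⟩
  · exact ⟨v, Or.inr ⟨i, hv, hx⟩, Or.inl hy⟩

lemma LiesOver.reachable_inl {x : SkelV E Vs} {v : V} (hx : LiesOver x v) (hv : v ∈ Vs) :
    (skelGraph E Vs).Reachable x ⟨Sum.inl v, hv⟩ := by
  rcases hx with hx | ⟨i, hvi, hx⟩
  · obtain rfl : x = ⟨Sum.inl v, hv⟩ := Subtype.ext hx
    rfl
  · exact Adj.reachable (Or.inr ⟨v, i, _, rfl, hx, hvi, rfl⟩)

lemma LiesOver.exists_reachable_of_adj {G : SimpleGraph V} (hcover : G.edgeSet ⊆ ⋃ i, E i)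
    (hVs : ∀ v, IsBoundary E v → v ∈ Vs) {x : SkelV E Vs} {v w : V} (hx : LiesOver x v)
    (hvw : G.Adj v w) : ∃ y, (skelGraph E Vs).Reachable x y ∧ LiesOver y w := by
  obtain ⟨j, hj⟩ := Set.mem_iUnion.1 (hcover (G.mem_edgeSet.2 hvw))
  have hadj : (regG E j).Adj v w := regG_adj.2 ⟨hj, hvw.ne⟩
  have hvj : v ∈ (regG E j).support := ⟨w, hadj⟩
  suffices ∃ y, (skelGraph E Vs).Reachable x y ∧
      y.1 = Sum.inr ⟨j, (regG E j).connectedComponentMk v⟩ by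
    obtain ⟨y, hxy, hy⟩ := this
    refine ⟨y, hxy, Or.inr ⟨j, ⟨v, hadj.symm⟩, ?_⟩⟩
    rw [hy, ConnectedComponent.sound hadj.reachable]
  have through_inl (hv : v ∈ Vs) : ∃ y, (skelGraph E Vs).Reachable x y ∧
      y.1 = Sum.inr ⟨j, (regG E j).connectedComponentMk v⟩ :=
    ⟨⟨Sum.inr ⟨j, _⟩, v, hv, hvj, rfl⟩, (hx.reachable_inl hv).trans
      (Adj.reachable (Or.inl ⟨v, j, _, rfl, rfl, hvj, rfl⟩)), rfl⟩
  rcases hx with hx | ⟨i, hvi, hx⟩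
  · have hv := x.2
    rw [hx] at hv
    exact through_inl hv
  · by_cases hij : i = j
    · subst hij
      exact ⟨x, Reachable.rfl, hx⟩
    · exact through_inl (hVs v (isBoundary_of_mem_support hij hvi hj))

lemma LiesOver.exists_reachable_of_reachable {G : SimpleGraph V}
    (hcover : G.edgeSet ⊆ ⋃ i, E i) (hVs : ∀ v, IsBoundary E v → v ∈ Vs)
    {x : SkelV E Vs} {v w : V} (hx : LiesOver x v) (h : G.Reachable v w) :
    ∃ y, (skelGraph E Vs).Reachable x y ∧ LiesOver y w := by
  obtain ⟨p⟩ := h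
  induction p generalizing x with
  | nil => exact ⟨x, Reachable.rfl, hx⟩
  | cons hvu _ ih =>
    obtain ⟨y, hxy, hy⟩ := hx.exists_reachable_of_adj hcover hVs hvu
    obtain ⟨z, hyz, hz⟩ := ih hy
    exact ⟨z, hxy.trans hyz, hz⟩

def component {G : SimpleGraph V} (hle : ∀ i, regG E i ≤ G) (x : SkelV E Vs) :
    G.ConnectedComponent :=
  Sum.elim G.connectedComponentMk (fun p => p.2.map (Hom.ofLE (hle p.1))) x.1

lemma LiesOver.component_eq {G : SimpleGraph V} (hle : ∀ i, regG E i ≤ G)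
    {x : SkelV E Vs} {v : V} (hx : LiesOver x v) :
    component hle x = G.connectedComponentMk v := by
  rcases hx with hx | ⟨i, -, hx⟩ <;> simp [component, hx]

lemma component_eq_of_reachable {G : SimpleGraph V} (hle : ∀ i, regG E i ≤ G)
    {x y : SkelV E Vs} (h : (skelGraph E Vs).Reachable x y) :
    component hle x = component hle y := by
  obtain ⟨p⟩ := h
  induction p with
  | nil => rfl
  | cons hxy _ ih =>
    obtain ⟨v, hx, hy⟩ := exists_liesOver_of_adj hxy
    rw [hx.component_eq, ← ih, hy.component_eq]

end SkelV

end

open SkelV in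
theorem stmt5_general {V : Type*} (G : SimpleGraph V) {k : ℕ}
    (E : Fin k → Set (Sym2 V))
    (hunion : ⋃ i, E i = G.edgeSet)
    (Vs : Set V)
    (hVs : ∀ v : V,
      (∃ i j, i ≠ j ∧ (∃ e ∈ E i, v ∈ e) ∧ (∃ e' ∈ E j, v ∈ e')) → v ∈ Vs)
    (u w : V) (hu : u ∈ Vs) (hw : w ∈ Vs) :
    (skelGraph E Vs).Reachable ⟨Sum.inl u, hu⟩ ⟨Sum.inl w, hw⟩ ↔ G.Reachable u w := by
  constructor
  · intro h
    have hle : ∀ i, regG E i ≤ G := fun i => regG_le (hunion ▸ Set.subset_iUnion E i)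
    have hcomp := component_eq_of_reachable hle h
    rw [(liesOver_inl hu).component_eq, (liesOver_inl hw).component_eq] at hcomp
    exact ConnectedComponent.exact hcomp
  · intro h
    obtain ⟨y, hy, hyw⟩ := (liesOver_inl hu).exists_reachable_of_reachable hunion.ge hVs h
    exact hy.trans (hyw.reachable_inl hw)

/-- Let the edge set of a finite simple graph `G` be partitioned into
regions `E 0, …, E (k-1)`, let `Vs` be a skeleton set (containing every boundary
vertex), and let `skelGraph E Vs` be the associated skeleton graph.  Then two
vertices `u, w ∈ Vs` are connected in the skeleton graph iff they are connected
in `G`. -/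
theorem stmt5 {V : Type*} [Fintype V] (G : SimpleGraph V) {k : ℕ}
    (E : Fin k → Set (Sym2 V))
    (hunion : ⋃ i, E i = G.edgeSet)
    (hdisj : ∀ i j, i ≠ j → Disjoint (E i) (E j))
    (Vs : Set V)
    (hVs : ∀ v : V,
      (∃ i j, i ≠ j ∧ (∃ e ∈ E i, v ∈ e) ∧ (∃ e' ∈ E j, v ∈ e')) → v ∈ Vs)
    (u w : V) (hu : u ∈ Vs) (hw : w ∈ Vs) :
    (skelGraph E Vs).Reachable ⟨Sum.inl u, hu⟩ ⟨Sum.inl w, hw⟩ ↔ G.Reachable u w :=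
  stmt5_general G E hunion Vs hVs u w hu hw
end
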